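/- Let S and Ω be Polish spaces, r a nonzero finite measure on Ω, γ : Ω × S^ℕ₊ → S measurable with γ[ω](x) depending only on the first κ(ω) coordinates, where κ : Ω → ℕ is measurable and ∫ κ(ω) r(dω) < ∞. Define T(μ) as the law of γ[ω](X_1, X_2, …) where ω has law |r|⁻¹ r and (X_i) are i.i.d. with law μ. Then ‖T(μ) - T(ν)‖ ≤ (|r|⁻¹ ∫ κ(ω) r(dω)) ‖μ - ν‖ for all probability measures μ, ν on S. -/

import Mathlib

/-!
`T(μ)` is a mixture over `ω` of push-forwards of the product measures `μ^{⊗κ(ω)}`. The total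
variation distance does not increase under push-forwards, is convex under mixtures, and grows
at most additively along products: replacing one factor at a time gives
`‖μ^{⊗n} - ν^{⊗n}‖ ≤ n ‖μ - ν‖`. Averaging `κ(ω) ‖μ - ν‖` against `|r|⁻¹ r` gives the bound.
-/

open MeasureTheory

/-- The total variation distance `‖μ - ν‖ = sup_A |μ(A) - ν(A)|`. -/
noncomputable def tvDist {S : Type*} [MeasurableSpace S] (μ ν : Measure S) : ℝ :=
  sSup {c | ∃ A : Set S, MeasurableSet A ∧ c = |(μ A).toReal - (ν A).toReal|}

/-- The RDE operator: `rdeT r γ κ μ` is the law of `γ[ω](X_1, X_2, …)` where `ω`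
has law `|r|⁻¹ r` and the `X_i` are i.i.d. with law `μ`; since `γ[ω]` depends only on
the first `κ(ω)` coordinates, it is built from the finite product measure
`μ^{⊗κ(ω)}`, extending by an arbitrary point in the remaining coordinates. -/
noncomputable def rdeT {Ω S : Type*} [MeasurableSpace Ω] [MeasurableSpace S] [Nonempty S]
    (r : Measure Ω) (γ : Ω → (ℕ → S) → S) (κ : Ω → ℕ) (μ : Measure S) : Measure S :=
  ((r Set.univ)⁻¹ • r).bind fun ω =>
    Measure.map
      (fun v : Fin (κ ω) → S =>
        γ ω (fun i => if h : i < κ ω then v ⟨i, h⟩ else Classical.arbitrary S))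
      (Measure.pi fun _ : Fin (κ ω) => μ)

open scoped ENNReal

section TotalVariation

variable {S : Type*} [MeasurableSpace S]

lemma bddAbove_tvDist_set (μ ν : Measure S) [IsFiniteMeasure μ] [IsFiniteMeasure ν] :
    BddAbove {c | ∃ A : Set S, MeasurableSet A ∧ c = |(μ A).toReal - (ν A).toReal|} := by
  refine ⟨(μ Set.univ).toReal + (ν Set.univ).toReal, ?_⟩
  rintro c ⟨A, -, rfl⟩
  have hμ : (μ A).toReal ≤ (μ Set.univ).toReal := measureReal_mono (Set.subset_univ A)
  have hν : (ν A).toReal ≤ (ν Set.univ).toReal := measureReal_mono (Set.subset_univ A)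
  have hμ₀ : 0 ≤ (μ A).toReal := ENNReal.toReal_nonneg
  have hν₀ : 0 ≤ (ν A).toReal := ENNReal.toReal_nonneg
  rw [abs_le]
  constructor <;> linarith

lemma abs_sub_le_tvDist (μ ν : Measure S) [IsFiniteMeasure μ] [IsFiniteMeasure ν]
    {A : Set S} (hA : MeasurableSet A) : |(μ A).toReal - (ν A).toReal| ≤ tvDist μ ν :=
  le_csSup (bddAbove_tvDist_set μ ν) ⟨A, hA, rfl⟩

lemma tvDist_le {μ ν : Measure S} {c : ℝ}
    (h : ∀ A, MeasurableSet A → |(μ A).toReal - (ν A).toReal| ≤ c) : tvDist μ ν ≤ c :=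
  csSup_le ⟨_, ∅, MeasurableSet.empty, rfl⟩ fun _ ⟨A, hA, hc⟩ => hc ▸ h A hA

lemma tvDist_triangle (μ ν ρ : Measure S) [IsFiniteMeasure μ] [IsFiniteMeasure ν]
    [IsFiniteMeasure ρ] : tvDist μ ρ ≤ tvDist μ ν + tvDist ν ρ :=
  tvDist_le fun _ hA =>
    (abs_sub_le _ _ _).trans (add_le_add (abs_sub_le_tvDist μ ν hA) (abs_sub_le_tvDist ν ρ hA))

lemma tvDist_map_le {T : Type*} [MeasurableSpace T] {f : S → T} (hf : Measurable f)
    (μ ν : Measure S) [IsFiniteMeasure μ] [IsFiniteMeasure ν] :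
    tvDist (μ.map f) (ν.map f) ≤ tvDist μ ν :=
  tvDist_le fun _ hA => by
    rw [Measure.map_apply hf hA, Measure.map_apply hf hA]
    exact abs_sub_le_tvDist μ ν (hf hA)

lemma abs_toReal_lintegral_sub_le {β : Type*} [MeasurableSpace β] {ρ : Measure β}
    {f g : β → ℝ≥0∞} (hf : AEMeasurable f ρ) (hg : AEMeasurable g ρ)
    (hfi : ∫⁻ x, f x ∂ρ ≠ ∞) (hgi : ∫⁻ x, g x ∂ρ ≠ ∞) {c : β → ℝ} (hc : Integrable c ρ)
    (h : ∀ᵐ x ∂ρ, |(f x).toReal - (g x).toReal| ≤ c x) :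
    |(∫⁻ x, f x ∂ρ).toReal - (∫⁻ x, g x ∂ρ).toReal| ≤ ∫ x, c x ∂ρ := by
  have hfI := integrable_toReal_of_lintegral_ne_top hf hfi
  have hgI := integrable_toReal_of_lintegral_ne_top hg hgi
  rw [← integral_toReal hf (ae_lt_top' hf hfi), ← integral_toReal hg (ae_lt_top' hg hgi),
    ← integral_sub hfI hgI]
  exact abs_integral_le_integral_abs.trans (integral_mono_ae (hfI.sub hgI).abs hc h)

lemma tvDist_bind_le {β : Type*} [MeasurableSpace β] (ρ : Measure β) [IsFiniteMeasure ρ]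
    {K₁ K₂ : β → Measure S} (hK₁ : Measurable K₁) (hK₂ : Measurable K₂)
    [∀ x, IsZeroOrProbabilityMeasure (K₁ x)] [∀ x, IsZeroOrProbabilityMeasure (K₂ x)]
    {c : β → ℝ} (hc : Integrable c ρ) (h : ∀ x, tvDist (K₁ x) (K₂ x) ≤ c x) :
    tvDist (ρ.bind K₁) (ρ.bind K₂) ≤ ∫ x, c x ∂ρ := by
  refine tvDist_le fun A hA => ?_
  have hfin : ∀ K : β → Measure S, (∀ x, IsZeroOrProbabilityMeasure (K x)) →
      ∫⁻ x, K x A ∂ρ ≠ ∞ := fun K _ =>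
    ne_top_of_le_ne_top (by simp)
      (lintegral_mono fun x => prob_le_one : ∫⁻ x, K x A ∂ρ ≤ ∫⁻ _, 1 ∂ρ)
  rw [Measure.bind_apply hA hK₁.aemeasurable, Measure.bind_apply hA hK₂.aemeasurable]
  exact abs_toReal_lintegral_sub_le ((Measure.measurable_coe hA).comp hK₁).aemeasurable
    ((Measure.measurable_coe hA).comp hK₂).aemeasurable (hfin K₁ inferInstance)
    (hfin K₂ inferInstance) hc
    (ae_of_all _ fun x => (abs_sub_le_tvDist _ _ hA).trans (h x))

variable {β : Type*} [MeasurableSpace β]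

lemma tvDist_prod_left_le (ρ : Measure β) [IsProbabilityMeasure ρ]
    (μ ν : Measure S) [IsProbabilityMeasure μ] [IsProbabilityMeasure ν] :
    tvDist (ρ.prod μ) (ρ.prod ν) ≤ tvDist μ ν := by
  rw [Measure.prod_def, Measure.prod_def]
  calc _ ≤ ∫ _, tvDist μ ν ∂ρ :=
        tvDist_bind_le ρ Measurable.map_prodMk_left Measurable.map_prodMk_left
          (integrable_const _) fun _ => tvDist_map_le measurable_prodMk_left μ ν
    _ = tvDist μ ν := by simp

lemma tvDist_prod_right_le (μ ν : Measure S) [IsProbabilityMeasure μ] [IsProbabilityMeasure ν]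
    (ρ : Measure β) [IsProbabilityMeasure ρ] :
    tvDist (μ.prod ρ) (ν.prod ρ) ≤ tvDist μ ν := by
  rw [← Measure.prod_swap (μ := ρ) (ν := μ), ← Measure.prod_swap (μ := ρ) (ν := ν)]
  exact (tvDist_map_le measurable_swap _ _).trans (tvDist_prod_left_le ρ μ ν)

lemma tvDist_pi_le (μ ν : Measure S) [IsProbabilityMeasure μ] [IsProbabilityMeasure ν] (n : ℕ) :
    tvDist (Measure.pi fun _ : Fin n => μ) (Measure.pi fun _ : Fin n => ν)
      ≤ n * tvDist μ ν := by
  induction n with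
  | zero =>
    rw [Measure.pi_of_empty, Measure.pi_of_empty]
    exact tvDist_le fun _ _ => by simp
  | succ n ih =>
    let e := MeasurableEquiv.piFinSuccAbove (fun _ : Fin (n + 1) => S) 0
    have hpi : ∀ θ : Measure S, [IsProbabilityMeasure θ] → Measure.pi (fun _ : Fin (n + 1) => θ)
        = (θ.prod (Measure.pi fun _ : Fin n => θ)).map e.symm :=
      fun θ _ => ((measurePreserving_piFinSuccAbove (fun _ => θ) 0).symm e).map_eq.symm
    rw [hpi μ, hpi ν]
    calc _ ≤ tvDist (μ.prod (Measure.pi fun _ : Fin n => μ))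
          (ν.prod (Measure.pi fun _ : Fin n => ν)) := tvDist_map_le e.symm.measurable _ _
      _ ≤ tvDist (μ.prod (Measure.pi fun _ : Fin n => μ))
            (μ.prod (Measure.pi fun _ : Fin n => ν))
          + tvDist (μ.prod (Measure.pi fun _ : Fin n => ν))
            (ν.prod (Measure.pi fun _ : Fin n => ν)) := tvDist_triangle _ _ _
      _ ≤ n * tvDist μ ν + tvDist μ ν :=
          add_le_add ((tvDist_prod_left_le _ _ _).trans ih) (tvDist_prod_right_le _ _ _)
      _ = (n + 1 : ℕ) * tvDist μ ν := by push_cast; ring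

end TotalVariation

section RDE

variable {Ω S : Type*} [MeasurableSpace Ω] [MeasurableSpace S] [Nonempty S]

noncomputable def extendFin {n : ℕ} (v : Fin n → S) : ℕ → S :=
  fun i => if h : i < n then v ⟨i, h⟩ else Classical.arbitrary S

lemma measurable_extendFin (n : ℕ) : Measurable (extendFin (S := S) (n := n)) := by
  refine measurable_pi_lambda _ fun i => ?_
  by_cases h : i < n
  · simpa [extendFin, h] using measurable_pi_apply _
  · simp [extendFin, h]

lemma measurable_map_of_uncurry {α β T : Type*} [MeasurableSpace α] [MeasurableSpace β]
    [MeasurableSpace T] {g : α → β → T} (hg : Measurable (Function.uncurry g))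
    (m : Measure β) [SFinite m] : Measurable fun a => m.map (g a) := by
  have h : (fun a => m.map (g a)) = fun a => (m.map (Prod.mk a)).map (Function.uncurry g) :=
    funext fun a => by rw [Measure.map_map hg measurable_prodMk_left]; rfl
  rw [h]
  exact (Measure.measurable_map _ hg).comp Measurable.map_prodMk_left

/-- The law of `γ[ω](X_1, X_2, …)` for fixed `ω`; `rdeT r γ κ μ` is
`((r univ)⁻¹ • r).bind (rdeLaw γ κ μ)` by definition. -/
noncomputable def rdeLaw (γ : Ω → (ℕ → S) → S) (κ : Ω → ℕ) (μ : Measure S) (ω : Ω) :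
    Measure S :=
  (Measure.pi fun _ : Fin (κ ω) => μ).map fun v => γ ω (extendFin v)

variable {γ : Ω → (ℕ → S) → S} {κ : Ω → ℕ}

lemma measurable_rdeLaw (hγ : Measurable (Function.uncurry γ)) (hκ : Measurable κ)
    (μ : Measure S) [SigmaFinite μ] : Measurable (rdeLaw γ κ μ) := by
  have h : Measurable fun p : Ω × ℕ =>
      (Measure.pi fun _ : Fin p.2 => μ).map fun v => γ p.1 (extendFin v) :=
    measurable_from_prod_countable_left fun n =>
      measurable_map_of_uncurry (g := fun ω (v : Fin n → S) => γ ω (extendFin v))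
        (hγ.comp (measurable_fst.prodMk ((measurable_extendFin n).comp measurable_snd)))
        (Measure.pi fun _ : Fin n => μ)
  exact h.comp (measurable_id.prodMk hκ)

instance (μ : Measure S) [IsProbabilityMeasure μ] (ω : Ω) :
    IsZeroOrProbabilityMeasure (rdeLaw γ κ μ ω) := by
  unfold rdeLaw
  infer_instance

lemma tvDist_rdeLaw_le (hγ : Measurable (Function.uncurry γ))
    (μ ν : Measure S) [IsProbabilityMeasure μ] [IsProbabilityMeasure ν] (ω : Ω) :
    tvDist (rdeLaw γ κ μ ω) (rdeLaw γ κ ν ω) ≤ κ ω * tvDist μ ν :=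
  (tvDist_map_le (hγ.of_uncurry_left.comp (measurable_extendFin _)) _ _).trans
    (tvDist_pi_le μ ν (κ ω))

end RDE

theorem stmt4_general {Ω S : Type*} [MeasurableSpace Ω] [MeasurableSpace S] [Nonempty S]
    (r : Measure Ω)
    (γ : Ω → (ℕ → S) → S) (hγ : Measurable (Function.uncurry γ))
    (κ : Ω → ℕ) (hκ : Measurable κ)
    (hmom : Integrable (fun ω => (κ ω : ℝ)) r)
    (μ ν : Measure S) [IsProbabilityMeasure μ] [IsProbabilityMeasure ν] :
    tvDist (rdeT r γ κ μ) (rdeT r γ κ ν)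
      ≤ ((r Set.univ).toReal⁻¹ * ∫ ω, (κ ω : ℝ) ∂r) * tvDist μ ν := by
  have hint : Integrable (fun ω => (κ ω : ℝ)) ((r Set.univ)⁻¹ • r) := by
    rcases eq_or_ne (r Set.univ) 0 with h | h
    · simp [Measure.measure_univ_eq_zero.1 h]
    · exact hmom.smul_measure (ENNReal.inv_ne_top.2 h)
  calc tvDist (rdeT r γ κ μ) (rdeT r γ κ ν)
      ≤ ∫ ω, (κ ω : ℝ) * tvDist μ ν ∂((r Set.univ)⁻¹ • r) :=
        tvDist_bind_le _ (measurable_rdeLaw hγ hκ μ) (measurable_rdeLaw hγ hκ ν)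
          (hint.mul_const _) (tvDist_rdeLaw_le hγ μ ν)
    _ = ((r Set.univ).toReal⁻¹ * ∫ ω, (κ ω : ℝ) ∂r) * tvDist μ ν := by
        rw [integral_mul_const, integral_smul_measure, ENNReal.toReal_inv, smul_eq_mul]

/-- Lipschitz bound for the RDE operator: if `r` is a nonzero finite measure, `γ[ω]`
depends only on the first `κ(ω)` coordinates, and `∫ κ dr < ∞`, then
`‖T(μ) - T(ν)‖ ≤ (|r|⁻¹ ∫ κ dr) ‖μ - ν‖` for probability measures `μ, ν`. -/
theorem stmt4 {Ω S : Type*} [MeasurableSpace Ω] [MeasurableSpace S] [Nonempty S]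
    (r : Measure Ω) [IsFiniteMeasure r] (hr : r Set.univ ≠ 0)
    (γ : Ω → (ℕ → S) → S) (hγ : Measurable (Function.uncurry γ))
    (κ : Ω → ℕ) (hκ : Measurable κ)
    (hdep : ∀ ω, ∀ x y : ℕ → S, (∀ i < κ ω, x i = y i) → γ ω x = γ ω y)
    (hmom : Integrable (fun ω => (κ ω : ℝ)) r)
    (μ ν : Measure S) [IsProbabilityMeasure μ] [IsProbabilityMeasure ν] :
    tvDist (rdeT r γ κ μ) (rdeT r γ κ ν)
      ≤ ((r Set.univ).toReal⁻¹ * ∫ ω, (κ ω : ℝ) ∂r) * tvDist μ ν :=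
  stmt4_general r γ hγ κ hκ hmom μ ν
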